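/- arXiv:1210.0780 — 3 statements merged into one kernel-verified Lean document; each statement's English description precedes it below -/
import Mathlib

section
/- Let F ⊆ ℝ^d be a bounded set satisfying the Ahlfors–David condition: there exist constants c₀, c₁ > 0 and r_AD > 0 such that for all x ∈ F and all r ∈ (0, r_AD], c₀·r^{d-1} ≤ H_{d-1}(F ∩ B(x,r)) ≤ c₁·r^{d-1}, where H_{d-1} denotes the (d-1)-dimensional Hausdorff measure. Then there exists a constant C > 0 such that for every non-empty Borel set E ⊆ F, the (d-1)-dimensional Hausdorff content satisfies H^∞_{d-1}(E) ≥ C · H_{d-1}(E). -/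
open MeasureTheory Metric Set
open scoped ENNReal NNReal

/-- The `(d-1)`-dimensional Hausdorff content of a set `A ⊆ ℝ^d`:
the infimum of `∑ rⱼ^(d-1)` over countable covers of `A` by balls `B(xⱼ, rⱼ)`
with centers `xⱼ ∈ A` and radii `rⱼ > 0`. -/
noncomputable def hausdorffContent (d : ℕ) (A : Set (EuclideanSpace ℝ (Fin d))) : ℝ≥0∞ :=
  ⨅ (c : ℕ → (EuclideanSpace ℝ (Fin d)) × ℝ) (_ : ∀ j, (c j).1 ∈ A ∧ 0 < (c j).2)
    (_ : A ⊆ ⋃ j, Metric.ball (c j).1 (c j).2),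
    ∑' j, ENNReal.ofReal ((c j).2 ^ ((d : ℝ) - 1))

/-- The `(-1)`-dimensional Hausdorff measure of a nonempty set is infinite. -/
lemma hausdorffMeasure_neg_one_eq_top {X : Type*} [MetricSpace X] [MeasurableSpace X]
    [BorelSpace X] {s : Set X} (hs : s.Nonempty) : μH[(-1 : ℝ)] s = ∞ := by
  rw [MeasureTheory.Measure.hausdorffMeasure_apply]
  rw [eq_top_iff]
  have key : ∀ r : ℝ≥0∞, 0 < r →
      r⁻¹ ≤ ⨅ (t : ℕ → Set X) (_ : s ⊆ ⋃ n, t n) (_ : ∀ n, EMetric.diam (t n) ≤ r),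
        ∑' n, ⨆ _ : (t n).Nonempty, EMetric.diam (t n) ^ (-1 : ℝ) := by
    intro r hr
    refine le_iInf fun t => le_iInf fun hst => le_iInf fun hd => ?_
    obtain ⟨x, hx⟩ := hs
    obtain ⟨m, hm⟩ := mem_iUnion.1 (hst hx)
    have hne : (t m).Nonempty := ⟨x, hm⟩
    calc r⁻¹ ≤ (EMetric.diam (t m))⁻¹ := ENNReal.inv_le_inv' (hd m)
      _ = ⨆ _ : (t m).Nonempty, EMetric.diam (t m) ^ (-1 : ℝ) := by
          rw [ENNReal.rpow_neg_one]; simp [hne]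
      _ ≤ _ := ENNReal.le_tsum m
  have key2 : ∀ n : ℕ, (n : ℝ≥0∞) ≤ ⨆ (r : ℝ≥0∞) (_ : 0 < r),
      ⨅ (t : ℕ → Set X) (_ : s ⊆ ⋃ n, t n) (_ : ∀ n, EMetric.diam (t n) ≤ r),
        ∑' n, ⨆ _ : (t n).Nonempty, EMetric.diam (t n) ^ (-1 : ℝ) := by
    intro n
    have h1 : (0:ℝ≥0∞) < ((n:ℝ≥0∞)+1)⁻¹ := by
      rw [ENNReal.inv_pos]
      exact (ENNReal.add_lt_top.mpr ⟨ENNReal.natCast_lt_top n, ENNReal.one_lt_top⟩).ne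
    calc (n : ℝ≥0∞) ≤ ((n:ℝ≥0∞)+1)⁻¹⁻¹ := by rw [inv_inv]; exact le_self_add
      _ ≤ _ := le_trans (key _ h1) (le_iSup₂
          (f := fun r (_ : 0 < r) =>
            ⨅ (t : ℕ → Set X) (_ : s ⊆ ⋃ n, t n) (_ : ∀ n, EMetric.diam (t n) ≤ r),
              ∑' n, ⨆ _ : (t n).Nonempty, EMetric.diam (t n) ^ (-1 : ℝ))
          (((n:ℝ≥0∞)+1)⁻¹) h1)
  refine le_of_forall_lt fun c hc => ?_
  obtain ⟨n, hn⟩ := ENNReal.exists_nat_gt hc.ne_top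
  exact lt_of_lt_of_le hn (key2 n)

/-- If `F ⊆ ℝ^d` is bounded and satisfies the Ahlfors–David condition, then there is a
constant `C > 0` such that `H^∞_{d-1}(E) ≥ C · H_{d-1}(E)` for every nonempty Borel
set `E ⊆ F`. -/
theorem content_ge_measure_of_AhlforsDavid (d : ℕ)
    (F : Set (EuclideanSpace ℝ (Fin d))) (hFb : Bornology.IsBounded F)
    (c₀ c₁ rAD : ℝ) (hc₀ : 0 < c₀) (hc₁ : 0 < c₁) (hrAD : 0 < rAD)
    (hAD : ∀ x ∈ F, ∀ r : ℝ, 0 < r → r ≤ rAD →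
      ENNReal.ofReal (c₀ * r ^ ((d : ℝ) - 1)) ≤ μH[(d : ℝ) - 1] (F ∩ Metric.ball x r) ∧
      μH[(d : ℝ) - 1] (F ∩ Metric.ball x r) ≤ ENNReal.ofReal (c₁ * r ^ ((d : ℝ) - 1))) :
    ∃ C : ℝ, 0 < C ∧ ∀ E : Set (EuclideanSpace ℝ (Fin d)),
      E ⊆ F → E.Nonempty → MeasurableSet E →
      ENNReal.ofReal C * μH[(d : ℝ) - 1] E ≤ hausdorffContent d E := by
  rcases Nat.eq_zero_or_pos d with hd0 | hdpos
  · -- degenerate case `d = 0`: the AD hypothesis is contradictory for nonempty `F`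
    subst hd0
    refine ⟨1, one_pos, fun E hEF hEne _ => ?_⟩
    exfalso
    obtain ⟨x, hx⟩ := hEne
    have hxF : x ∈ F := hEF hx
    have hne : (F ∩ Metric.ball x rAD).Nonempty := ⟨x, hxF, mem_ball_self hrAD⟩
    have h2 := (hAD x hxF rAD hrAD le_rfl).2
    rw [show ((0:ℕ):ℝ) - 1 = (-1 : ℝ) by norm_num,
      hausdorffMeasure_neg_one_eq_top hne] at h2
    exact ENNReal.ofReal_ne_top (top_le_iff.mp h2)
  · have hexp : (0:ℝ) ≤ (d : ℝ) - 1 := by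
      have : (1:ℝ) ≤ (d : ℝ) := by exact_mod_cast hdpos
      linarith
    -- `F` has finite Hausdorff measure
    set M : ℝ≥0∞ := μH[(d : ℝ) - 1] F with hM
    have hMfin : M ≠ ∞ := by
      have hTB : TotallyBounded F :=
        (hFb.isCompact_closure.totallyBounded).subset subset_closure
      obtain ⟨t, htF, htfin, hcov⟩ := finite_approx_of_totallyBounded hTB rAD hrAD
      have : M ≤ ∑' y : t, μH[(d : ℝ) - 1] (F ∩ Metric.ball y rAD) := by
        calc M ≤ μH[(d : ℝ) - 1] (⋃ y ∈ t, F ∩ Metric.ball y rAD) := by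
              refine measure_mono fun z hz => ?_
              obtain ⟨y, hy, hzy⟩ := by simpa using hcov hz
              exact mem_biUnion hy ⟨hz, hzy⟩
          _ ≤ ∑' y : t, μH[(d : ℝ) - 1] (F ∩ Metric.ball y rAD) := by
              haveI := htfin.countable.to_subtype
              rw [biUnion_eq_iUnion]
              exact measure_iUnion_le _
      refine (this.trans_lt ?_).ne
      have hb : ∀ y : t, μH[(d : ℝ) - 1] (F ∩ Metric.ball y rAD)
          ≤ ENNReal.ofReal (c₁ * rAD ^ ((d : ℝ) - 1)) :=
        fun y => (hAD y (htF y.2) rAD hrAD le_rfl).2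
      calc ∑' y : t, μH[(d : ℝ) - 1] (F ∩ Metric.ball y rAD)
          ≤ ∑' _ : t, ENNReal.ofReal (c₁ * rAD ^ ((d : ℝ) - 1)) := ENNReal.tsum_le_tsum hb
        _ < ∞ := by
            haveI := htfin.fintype
            rw [tsum_fintype]
            exact ENNReal.sum_lt_top.mpr fun _ _ => ENNReal.ofReal_lt_top
    -- the comparison constant
    have hrADpow : (0:ℝ) < rAD ^ ((d : ℝ) - 1) := Real.rpow_pos_of_pos hrAD _
    set a : ℝ≥0∞ := ENNReal.ofReal (rAD ^ ((d : ℝ) - 1)) with ha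
    have ha0 : a ≠ 0 := (ENNReal.ofReal_pos.mpr hrADpow).ne'
    have haT : a ≠ ∞ := ENNReal.ofReal_ne_top
    set K : ℝ≥0∞ := ENNReal.ofReal c₁ + M / a with hK
    have hK0 : K ≠ 0 := by
      simp only [hK, ne_eq, add_eq_zero, not_and]
      intro h
      exact absurd h (by simp [ENNReal.ofReal_eq_zero]; linarith)
    have hKT : K ≠ ∞ := by
      simp only [hK, ne_eq, ENNReal.add_eq_top, not_or]
      exact ⟨ENNReal.ofReal_ne_top, (ENNReal.div_lt_top hMfin ha0).ne⟩
    refine ⟨(K⁻¹).toReal, ?_, ?_⟩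
    · refine ENNReal.toReal_pos ?_ ?_
      · simp [ENNReal.inv_ne_zero, hKT]
      · simp [ENNReal.inv_ne_top, hK0]
    intro E hEF hEne _
    have hC : ENNReal.ofReal (K⁻¹).toReal = K⁻¹ :=
      ENNReal.ofReal_toReal (by simp [ENNReal.inv_ne_top, hK0])
    rw [hC]
    refine le_iInf fun c => le_iInf fun hc => le_iInf fun hcov => ?_
    -- per-ball bound
    have hball : ∀ j : ℕ, μH[(d : ℝ) - 1] (E ∩ Metric.ball (c j).1 (c j).2)
        ≤ K * ENNReal.ofReal ((c j).2 ^ ((d : ℝ) - 1)) := by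
      intro j
      obtain ⟨hcen, hrpos⟩ := hc j
      rcases le_or_gt (c j).2 rAD with hle | hlt
      · calc μH[(d : ℝ) - 1] (E ∩ Metric.ball (c j).1 (c j).2)
            ≤ μH[(d : ℝ) - 1] (F ∩ Metric.ball (c j).1 (c j).2) :=
              measure_mono (inter_subset_inter_left _ hEF)
          _ ≤ ENNReal.ofReal (c₁ * (c j).2 ^ ((d : ℝ) - 1)) :=
              (hAD _ (hEF hcen) _ hrpos hle).2
          _ = ENNReal.ofReal c₁ * ENNReal.ofReal ((c j).2 ^ ((d : ℝ) - 1)) :=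
              ENNReal.ofReal_mul hc₁.le
          _ ≤ K * ENNReal.ofReal ((c j).2 ^ ((d : ℝ) - 1)) :=
              mul_le_mul_left (by rw [hK]; exact le_self_add) _
      · have hpowle : a ≤ ENNReal.ofReal ((c j).2 ^ ((d : ℝ) - 1)) := by
          rw [ha]
          exact ENNReal.ofReal_le_ofReal
            (Real.rpow_le_rpow hrAD.le hlt.le hexp)
        calc μH[(d : ℝ) - 1] (E ∩ Metric.ball (c j).1 (c j).2)
            ≤ M := measure_mono (inter_subset_left.trans hEF)
          _ = (M / a) * a := (ENNReal.div_mul_cancel ha0 haT).symm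
          _ ≤ (M / a) * ENNReal.ofReal ((c j).2 ^ ((d : ℝ) - 1)) :=
              mul_le_mul_right hpowle _
          _ ≤ K * ENNReal.ofReal ((c j).2 ^ ((d : ℝ) - 1)) :=
              mul_le_mul_left (by rw [hK]; exact le_add_self) _
    -- put it together
    have hsub : μH[(d : ℝ) - 1] E
        ≤ ∑' j, μH[(d : ℝ) - 1] (E ∩ Metric.ball (c j).1 (c j).2) := by
      calc μH[(d : ℝ) - 1] E
          ≤ μH[(d : ℝ) - 1] (⋃ j, E ∩ Metric.ball (c j).1 (c j).2) := by
            refine measure_mono fun z hz => ?_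
            obtain ⟨j, hj⟩ := mem_iUnion.1 (hcov hz)
            exact mem_iUnion.2 ⟨j, hz, hj⟩
        _ ≤ _ := measure_iUnion_le _
    have hmain : μH[(d : ℝ) - 1] E ≤ K * ∑' j, ENNReal.ofReal ((c j).2 ^ ((d : ℝ) - 1)) := by
      refine hsub.trans ?_
      rw [← ENNReal.tsum_mul_left]
      exact ENNReal.tsum_le_tsum hball
    calc K⁻¹ * μH[(d : ℝ) - 1] E
        ≤ K⁻¹ * (K * ∑' j, ENNReal.ofReal ((c j).2 ^ ((d : ℝ) - 1))) :=
          mul_le_mul_right hmain _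
      _ = ∑' j, ENNReal.ofReal ((c j).2 ^ ((d : ℝ) - 1)) := by
          rw [← mul_assoc, ENNReal.inv_mul_cancel hK0 hKT, one_mul]
end

section
/- Let (X,μ) be a σ-finite measure space and f ∈ L^1(X) + L^∞(X). Then for every t > 0, the K-functional satisfies K(f, t, L^1(X), L^∞(X)) = t·f^{**}(t), where f^{**}(t) = (1/t)∫₀^t f^*(s) ds and f^* is the decreasing rearrangement of f. -/
open MeasureTheory Set
open scoped ENNReal NNReal

/-- The decreasing rearrangement `f^*(t) = inf { λ : μ({|f| > λ}) ≤ t }`. -/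
noncomputable def decRearrangement {X : Type} [MeasurableSpace X] (μ : Measure X)
    (f : X → ℝ) (t : ℝ) : ℝ≥0∞ :=
  sInf {l : ℝ≥0∞ | μ {x | l < (‖f x‖₊ : ℝ≥0∞)} ≤ ENNReal.ofReal t}

/-- The maximal decreasing rearrangement `f^{**}(t) = (1/t) ∫₀^t f^*(s) ds`. -/
noncomputable def maxDecRearrangement {X : Type} [MeasurableSpace X] (μ : Measure X)
    (f : X → ℝ) (t : ℝ) : ℝ≥0∞ :=
  (ENNReal.ofReal t)⁻¹ * ∫⁻ s in Set.Ioo (0 : ℝ) t, decRearrangement μ f s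

/-- The K-functional for the couple `(L¹(μ), L^∞(μ))`:
`K(f,t) = inf { ‖g‖₁ + t ‖h‖_∞ : f = g + h }`. -/
noncomputable def KfunctionalL1Linfty {X : Type} [MeasurableSpace X] (μ : Measure X)
    (f : X → ℝ) (t : ℝ) : ℝ≥0∞ :=
  ⨅ (g : X → ℝ) (h : X → ℝ) (_ : f = g + h)
    (_ : AEStronglyMeasurable g μ) (_ : AEStronglyMeasurable h μ),
    eLpNorm g 1 μ + ENNReal.ofReal t * eLpNorm h ⊤ μ

/-! Both sides equal `∫₀^∞ min(t, d_f(l)) dl`, where `d_f(l) = μ{|f| > l}`. By the layer-cake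
formula and the equimeasurability of `f` and `f^*`, `∫₀^t f^*` is this integral, which is at most
`t m + ∫ (|f| - m)⁺` for every level `m ≥ 0`, with equality at `m = f^*(t)`. If `f = g + h` with
`‖h‖_∞ ≤ m` then `(|f| - m)⁺ ≤ |g|`, so `t f^{**}(t) ≤ K(f, t)`. Conversely, splitting `f` into its
truncation at height `f^*(t)` and the remainder realises `t f^*(t) + ∫ (|f| - f^*(t))⁺`. -/

lemma volume_ofReal_lt_inter_Ioi (a : ℝ≥0∞) :
    volume ({s : ℝ | ENNReal.ofReal s < a} ∩ Ioi 0) = a := by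
  rcases eq_or_ne a ⊤ with rfl | ha
  · simp [Real.volume_Ioi]
  · have h : {s : ℝ | ENNReal.ofReal s < a} ∩ Ioi 0 = Ioo 0 a.toReal := by
      ext s
      simp only [mem_inter_iff, mem_ofPred_eq, mem_Ioi, mem_Ioo]
      exact ⟨fun ⟨h1, h2⟩ => ⟨h2, (ENNReal.ofReal_lt_iff_lt_toReal h2.le ha).mp h1⟩,
        fun ⟨h1, h2⟩ => ⟨(ENNReal.ofReal_lt_iff_lt_toReal h1.le ha).mpr h2, h1⟩⟩
    rw [h, Real.volume_Ioo, sub_zero, ENNReal.ofReal_toReal ha]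

lemma volume_ofReal_lt_inter_Ioo (a : ℝ≥0∞) (t : ℝ) :
    volume ({s : ℝ | ENNReal.ofReal s < a} ∩ Ioo 0 t) = min (ENNReal.ofReal t) a := by
  rw [← volume_ofReal_lt_inter_Ioi (min _ _)]
  congr 1
  ext s
  simp only [mem_inter_iff, mem_ofPred_eq, mem_Ioo, mem_Ioi, lt_min_iff,
    ENNReal.ofReal_lt_ofReal_iff']
  constructor
  · rintro ⟨h1, h2, h3⟩; exact ⟨⟨⟨h3, h2.trans h3⟩, h1⟩, h2⟩
  · rintro ⟨⟨⟨h3, -⟩, h1⟩, h2⟩; exact ⟨h1, h2, h3⟩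

lemma lintegral_eq_setLIntegral_Ioi_measure_ofReal_lt {α : Type*} [MeasurableSpace α]
    (ν : Measure α) [SFinite ν] {φ : α → ℝ≥0∞} (hφ : Measurable φ) :
    ∫⁻ x, φ x ∂ν = ∫⁻ l in Ioi 0, ν {x | ENNReal.ofReal l < φ x} := by
  set A : Set (α × ℝ) := {p | ENNReal.ofReal p.2 < φ p.1}
  have hA : MeasurableSet A :=
    measurableSet_lt (ENNReal.measurable_ofReal.comp measurable_snd) (hφ.comp measurable_fst)
  calc ∫⁻ x, φ x ∂ν = ∫⁻ x, volume.restrict (Ioi 0) (Prod.mk x ⁻¹' A) ∂ν := by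
        refine lintegral_congr fun x => ?_
        rw [Measure.restrict_apply (measurable_prodMk_left hA), ← volume_ofReal_lt_inter_Ioi (φ x)]
        rfl
    _ = ν.prod (volume.restrict (Ioi 0)) A := (Measure.prod_apply hA).symm
    _ = ∫⁻ l in Ioi 0, ν {x | ENNReal.ofReal l < φ x} := Measure.prod_apply_symm hA

lemma setLIntegral_Ioi_min_le (c : ℝ≥0∞) (φ : ℝ → ℝ≥0∞) {m : ℝ} (hm : 0 ≤ m) :
    ∫⁻ l in Ioi 0, min c (φ l) ≤ c * ENNReal.ofReal m + ∫⁻ l in Ioi m, φ l := by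
  rw [← Ioc_union_Ioi_eq_Ioi hm, lintegral_union measurableSet_Ioi (Ioc_disjoint_Ioi le_rfl)]
  gcongr ?_ + ?_
  · calc ∫⁻ l in Ioc 0 m, min c (φ l) ≤ ∫⁻ _ in Ioc 0 m, c :=
          lintegral_mono fun _ => min_le_left _ _
      _ = c * ENNReal.ofReal m := by rw [setLIntegral_const, Real.volume_Ioc, sub_zero]
  · exact lintegral_mono fun _ => min_le_right _ _

lemma setLIntegral_Ioi_min_eq (c : ℝ≥0∞) (φ : ℝ → ℝ≥0∞) {m : ℝ} (hm : 0 ≤ m)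
    (hlt : ∀ l ∈ Ioo 0 m, c ≤ φ l) (hgt : ∀ l ∈ Ioi m, φ l ≤ c) :
    ∫⁻ l in Ioi 0, min c (φ l) = c * ENNReal.ofReal m + ∫⁻ l in Ioi m, φ l := by
  rw [← Ioc_union_Ioi_eq_Ioi hm, lintegral_union measurableSet_Ioi (Ioc_disjoint_Ioi le_rfl),
    ← Measure.restrict_congr_set Ioo_ae_eq_Ioc,
    setLIntegral_congr_fun measurableSet_Ioo fun l hl => min_eq_left (hlt l hl),
    setLIntegral_congr_fun measurableSet_Ioi fun l hl => min_eq_right (hgt l hl),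
    setLIntegral_const, Real.volume_Ioo, sub_zero]

section Rearrangement

variable {X : Type} [MeasurableSpace X] {μ : Measure X} {f : X → ℝ}

def distribution (μ : Measure X) (f : X → ℝ) (a : ℝ≥0∞) : ℝ≥0∞ :=
  μ {x | a < ‖f x‖ₑ}

lemma distribution_antitone : Antitone (distribution μ f) :=
  fun _ _ hab => measure_mono fun _ hx => hab.trans_lt hx

/-- Right-continuity of the distribution function, by continuity of `μ` from below. -/
lemma distribution_decRearrangement_le (t : ℝ) :
    distribution μ f (decRearrangement μ f t) ≤ ENNReal.ofReal t := by
  set S := {a : ℝ≥0∞ | distribution μ f a ≤ ENNReal.ofReal t}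
  have hS : S.Nonempty := ⟨⊤, by simp [S, distribution]⟩
  obtain ⟨u, hu_anti, hu_lim, hu_mem⟩ := exists_seq_tendsto_sInf hS (OrderBot.bddBelow S)
  have hunion : {x | sInf S < ‖f x‖ₑ} = ⋃ n, {x | u n < ‖f x‖ₑ} := by
    ext x
    simp only [mem_ofPred_eq, mem_iUnion]
    exact ⟨fun hx => (hu_lim.eventually_lt_const hx).exists,
      fun ⟨n, hn⟩ => (sInf_le (hu_mem n)).trans_lt hn⟩
  have hmono : Monotone fun n => {x | u n < ‖f x‖ₑ} :=
    fun _ _ hmn _ hx => (hu_anti hmn).trans_lt hx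
  change μ {x | sInf S < ‖f x‖ₑ} ≤ _
  rw [hunion, hmono.measure_iUnion]
  exact iSup_le hu_mem

lemma decRearrangement_le_iff {t : ℝ} {a : ℝ≥0∞} :
    decRearrangement μ f t ≤ a ↔ distribution μ f a ≤ ENNReal.ofReal t :=
  ⟨fun h => (distribution_antitone h).trans (distribution_decRearrangement_le t),
    fun h => sInf_le h⟩

lemma lt_decRearrangement_iff {t : ℝ} {a : ℝ≥0∞} :
    a < decRearrangement μ f t ↔ ENNReal.ofReal t < distribution μ f a := by
  simpa only [not_le] using decRearrangement_le_iff.not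

lemma decRearrangement_antitone : Antitone (decRearrangement μ f) :=
  fun _ _ hst => sInf_le_sInf fun _ ha => ha.trans (ENNReal.ofReal_le_ofReal hst)

/-- Layer cake on `(0, t)`: `{s ∈ (0, t) | l < f^*(s)}` is an interval of length
`min(t, d_f(l))`. -/
lemma setLIntegral_Ioo_decRearrangement (t : ℝ) :
    ∫⁻ s in Ioo 0 t, decRearrangement μ f s
      = ∫⁻ l in Ioi 0, min (ENNReal.ofReal t) (distribution μ f (ENNReal.ofReal l)) := by
  have hmeas : Measurable (decRearrangement μ f) := decRearrangement_antitone.measurable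
  rw [lintegral_eq_setLIntegral_Ioi_measure_ofReal_lt _ hmeas]
  refine setLIntegral_congr_fun measurableSet_Ioi fun l _ => ?_
  rw [Measure.restrict_apply (measurableSet_lt measurable_const hmeas)]
  simp_rw [lt_decRearrangement_iff]
  exact volume_ofReal_lt_inter_Ioo _ t

lemma lintegral_ofReal_abs_sub (hf : AEMeasurable f μ) {m : ℝ} (hm : 0 ≤ m) :
    ∫⁻ x, ENNReal.ofReal (|f x| - m) ∂μ = ∫⁻ l in Ioi m, distribution μ f (ENNReal.ofReal l) := by
  have hpos : ∀ x, ENNReal.ofReal (|f x| - m) = ENNReal.ofReal (max (|f x| - m) 0) := by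
    simp
  simp_rw [hpos]
  rw [lintegral_eq_lintegral_meas_lt μ (f := fun x => max (|f x| - m) 0)
      (ae_of_all _ fun _ => le_max_right _ _) (by fun_prop),
    ← (measurePreserving_add_right volume m).setLIntegral_comp_preimage_emb
      (measurableEmbedding_addRight m) (fun l => distribution μ f (ENNReal.ofReal l)) (Ioi m),
    preimage_add_const_Ioi, sub_self]
  refine setLIntegral_congr_fun measurableSet_Ioi fun l (hl : 0 < l) => congrArg μ ?_
  ext x
  simp only [mem_ofPred_eq, lt_max_iff, Real.enorm_eq_ofReal_abs, ENNReal.ofReal_lt_ofReal_iff']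
  constructor
  · rintro (h | h) <;> constructor <;> linarith
  · rintro ⟨h, -⟩; left; linarith

lemma setLIntegral_decRearrangement_le (hf : AEMeasurable f μ) (t : ℝ) {m : ℝ} (hm : 0 ≤ m) :
    ∫⁻ s in Ioo 0 t, decRearrangement μ f s
      ≤ ENNReal.ofReal t * ENNReal.ofReal m + ∫⁻ x, ENNReal.ofReal (|f x| - m) ∂μ := by
  rw [setLIntegral_Ioo_decRearrangement, lintegral_ofReal_abs_sub hf hm]
  exact setLIntegral_Ioi_min_le _ _ hm

/-- `d_f > t` below `f^*(t)` and `d_f ≤ t` above it, so `setLIntegral_Ioi_min_le` is sharp there. -/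
lemma setLIntegral_decRearrangement_eq (hf : AEMeasurable f μ) (t : ℝ) {m : ℝ} (hm : 0 ≤ m)
    (hmt : ENNReal.ofReal m = decRearrangement μ f t) :
    ∫⁻ s in Ioo 0 t, decRearrangement μ f s
      = ENNReal.ofReal t * ENNReal.ofReal m + ∫⁻ x, ENNReal.ofReal (|f x| - m) ∂μ := by
  rw [setLIntegral_Ioo_decRearrangement, lintegral_ofReal_abs_sub hf hm]
  refine setLIntegral_Ioi_min_eq _ _ hm (fun l hl => ?_) (fun l hl => ?_)
  · refine (lt_decRearrangement_iff.mp ?_).le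
    rw [← hmt]
    exact (ENNReal.ofReal_lt_ofReal_iff_of_nonneg hl.1.le).mpr hl.2
  · refine decRearrangement_le_iff.mp ?_
    rw [← hmt]
    exact ENNReal.ofReal_le_ofReal (le_of_lt hl)

lemma setLIntegral_decRearrangement_eq_top {t : ℝ} (ht : 0 < t)
    (htop : decRearrangement μ f t = ⊤) :
    ∫⁻ s in Ioo 0 t, decRearrangement μ f s = ⊤ := by
  refine eq_top_iff.mpr ?_
  calc ⊤ = ∫⁻ _ in Ioo 0 t, ⊤ := by
        rw [setLIntegral_const, Real.volume_Ioo, sub_zero, ENNReal.top_mul]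
        exact (ENNReal.ofReal_pos.mpr ht).ne'
    _ ≤ ∫⁻ s in Ioo 0 t, decRearrangement μ f s :=
        setLIntegral_mono' measurableSet_Ioo fun s hs => htop ▸ decRearrangement_antitone hs.2.le

end Rearrangement

section Kfunctional

variable {X : Type} [MeasurableSpace X] {μ : Measure X} {f g h : X → ℝ}

lemma KfunctionalL1Linfty_le_of_eq_add (t : ℝ) (hfgh : f = g + h) (hg : AEStronglyMeasurable g μ)
    (hh : AEStronglyMeasurable h μ) :
    KfunctionalL1Linfty μ f t ≤ eLpNorm g 1 μ + ENNReal.ofReal t * eLpNorm h ⊤ μ :=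
  iInf₂_le_of_le g h <| iInf₂_le_of_le hfgh hg <| iInf_le _ hh

lemma abs_sub_clamp (a : ℝ) {m : ℝ} (hm : 0 ≤ m) :
    |a - max (-m) (min a m)| = max (|a| - m) 0 := by
  grind

lemma KfunctionalL1Linfty_le (hf : AEStronglyMeasurable f μ) (t : ℝ) {m : ℝ} (hm : 0 ≤ m) :
    KfunctionalL1Linfty μ f t
      ≤ ∫⁻ x, ENNReal.ofReal (|f x| - m) ∂μ + ENNReal.ofReal t * ENNReal.ofReal m := by
  set h : X → ℝ := fun x => max (-m) (min (f x) m)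
  have hh : AEStronglyMeasurable h μ :=
    (aemeasurable_const.max (hf.aemeasurable.min aemeasurable_const)).aestronglyMeasurable
  have hg_norm : eLpNorm (f - h) 1 μ = ∫⁻ x, ENNReal.ofReal (|f x| - m) ∂μ := by
    rw [eLpNorm_one_eq_lintegral_enorm]
    refine lintegral_congr fun x => ?_
    rw [Pi.sub_apply, Real.enorm_eq_ofReal_abs, abs_sub_clamp _ hm]
    simp
  have hh_norm : eLpNorm h ⊤ μ ≤ ENNReal.ofReal m := by
    rw [eLpNorm_exponent_top]
    refine eLpNormEssSup_le_of_ae_bound (ae_of_all _ fun x => ?_)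
    rw [Real.norm_eq_abs, abs_le]
    exact ⟨le_max_left _ _, max_le (by linarith) (min_le_right _ _)⟩
  calc KfunctionalL1Linfty μ f t ≤ eLpNorm (f - h) 1 μ + ENNReal.ofReal t * eLpNorm h ⊤ μ :=
        KfunctionalL1Linfty_le_of_eq_add t (sub_add_cancel f h).symm (hf.sub hh) hh
    _ ≤ _ := by rw [hg_norm]; gcongr

lemma lintegral_ofReal_abs_sub_le_eLpNorm (hfgh : f = g + h) {m : ℝ}
    (hh : ∀ᵐ x ∂μ, |h x| ≤ m) :
    ∫⁻ x, ENNReal.ofReal (|f x| - m) ∂μ ≤ eLpNorm g 1 μ := by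
  rw [eLpNorm_one_eq_lintegral_enorm]
  refine lintegral_mono_ae (hh.mono fun x hx => ?_)
  rw [Real.enorm_eq_ofReal_abs]
  refine ENNReal.ofReal_le_ofReal ?_
  have := abs_add_le (g x) (h x)
  rw [hfgh, Pi.add_apply]
  linarith

lemma setLIntegral_decRearrangement_le_eLpNorm_add {t : ℝ} (ht : 0 < t) (hfgh : f = g + h)
    (hg : AEStronglyMeasurable g μ) (hh : AEStronglyMeasurable h μ) :
    ∫⁻ s in Ioo 0 t, decRearrangement μ f s ≤ eLpNorm g 1 μ + ENNReal.ofReal t * eLpNorm h ⊤ μ := by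
  rcases eq_or_ne (eLpNorm h ⊤ μ) ⊤ with htop | hfin
  · simp [htop, ENNReal.mul_top, ht]
  have hbound : ∀ᵐ x ∂μ, |h x| ≤ (eLpNorm h ⊤ μ).toReal := by
    rw [eLpNorm_exponent_top]
    filter_upwards [ae_le_eLpNormEssSup (f := h) (μ := μ)] with x hx
    rw [← Real.norm_eq_abs, ← toReal_enorm]
    exact ENNReal.toReal_mono hfin hx
  have hfm : AEMeasurable f μ := hfgh ▸ (hg.add hh).aemeasurable
  calc ∫⁻ s in Ioo 0 t, decRearrangement μ f s
      ≤ ENNReal.ofReal t * ENNReal.ofReal (eLpNorm h ⊤ μ).toReal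
        + ∫⁻ x, ENNReal.ofReal (|f x| - (eLpNorm h ⊤ μ).toReal) ∂μ :=
        setLIntegral_decRearrangement_le hfm t ENNReal.toReal_nonneg
    _ ≤ ENNReal.ofReal t * eLpNorm h ⊤ μ + eLpNorm g 1 μ := by
        rw [ENNReal.ofReal_toReal hfin]
        gcongr
        exact lintegral_ofReal_abs_sub_le_eLpNorm hfgh hbound
    _ = eLpNorm g 1 μ + ENNReal.ofReal t * eLpNorm h ⊤ μ := add_comm _ _

end Kfunctional

lemma ofReal_mul_maxDecRearrangement {X : Type} [MeasurableSpace X] (μ : Measure X) (f : X → ℝ)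
    {t : ℝ} (ht : 0 < t) :
    ENNReal.ofReal t * maxDecRearrangement μ f t = ∫⁻ s in Ioo 0 t, decRearrangement μ f s := by
  rw [maxDecRearrangement, ← mul_assoc,
    ENNReal.mul_inv_cancel (ENNReal.ofReal_pos.mpr ht).ne' ENNReal.ofReal_ne_top, one_mul]

theorem Kfunctional_eq_t_mul_doubleStar_general (X : Type) [MeasurableSpace X]
    (μ : Measure X) (f : X → ℝ)
    (hf : ∃ g h : X → ℝ, f = g + h ∧ MemLp g 1 μ ∧ MemLp h ⊤ μ) :
    ∀ t : ℝ, 0 < t →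
      KfunctionalL1Linfty μ f t = ENNReal.ofReal t * maxDecRearrangement μ f t := by
  intro t ht
  have hfm : AEStronglyMeasurable f μ := by
    obtain ⟨g, h, rfl, hg, hh⟩ := hf
    exact hg.1.add hh.1
  rw [ofReal_mul_maxDecRearrangement μ f ht]
  refine le_antisymm ?_ (le_iInf₂ fun g h => le_iInf₂ fun hfgh hg => le_iInf fun hh =>
    setLIntegral_decRearrangement_le_eLpNorm_add ht hfgh hg hh)
  rcases eq_or_ne (decRearrangement μ f t) ⊤ with htop | hfin
  · rw [setLIntegral_decRearrangement_eq_top ht htop]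
    exact le_top
  · rw [setLIntegral_decRearrangement_eq hfm.aemeasurable t ENNReal.toReal_nonneg
      (ENNReal.ofReal_toReal hfin), add_comm]
    exact KfunctionalL1Linfty_le hfm t ENNReal.toReal_nonneg

/-- For a σ-finite measure space and `f ∈ L¹ + L^∞`:
`K(f, t, L¹, L^∞) = t · f^{**}(t)` for every `t > 0`. -/
theorem Kfunctional_eq_t_mul_doubleStar (X : Type) [MeasurableSpace X]
    (μ : Measure X) [SigmaFinite μ] (f : X → ℝ)
    (hf : ∃ g h : X → ℝ, f = g + h ∧ MemLp g 1 μ ∧ MemLp h ⊤ μ) :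
    ∀ t : ℝ, 0 < t →
      KfunctionalL1Linfty μ f t = ENNReal.ofReal t * maxDecRearrangement μ f t :=
  Kfunctional_eq_t_mul_doubleStar_general X μ f hf
end

section
/- Let E, F ⊆ ℝ^d be measurable with dist(E,F) = δ, and suppose T is an integral operator on L²(Ω), Ω ⊆ ℝ^d, with kernel k_t satisfying the Gaussian bound 0 ≤ k_t(x,y) ≤ C t^{−d/2} e^{−c|x−y|²/t} for a.e. x, y ∈ Ω. Then for every p ∈ [1,2] there exist constants C', c' > 0 such that for all h ∈ L²∩L^p supported in E ∩ Ω and all t > 0, ‖T h‖_{L²(F∩Ω)} ≤ C'·t^{(d/2 − d/p)/2}·e^{−c'δ²/t}·‖h‖_{L^p}. -/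
/-!
For `x ∈ F` and `y ∈ supp h ⊆ E` we have `|x - y| ≥ δ`, so the Gaussian splits as
`e^{-c|x-y|²/t} ≤ e^{-cδ²/(2t)} e^{-c|x-y|²/(2t)}`. The remaining kernel
`G(x, y) = e^{-c|x-y|²/(2t)}` has all its row and column `L^r` norms bounded by
`(2πt/(rc))^{d/(2r)}`, and Young's inequality for such kernels, with `1/p + 1/r = 1 + 1/2`,
bounds the `L²` norm of `∫ G(·, y) |h y| dy` by that constant times `‖h‖_p`. Young's inequality
itself comes from the pointwise Hölder splitting
`G f = (G^r f^p)^{1/q} (G^r)^{1-1/p} (f^p)^{1-1/r}` followed by Tonelli.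
The power of `t` is `t^{-d/2} t^{d/(2r)} = t^{(d/2 - d/p)/2}`.
-/

open MeasureTheory Set Real Function
open scoped ENNReal NNReal

section KernelYoung

variable {α β : Type*} [MeasurableSpace α] [MeasurableSpace β] {μ : Measure α} {ν : Measure β}
  {p q r : ℝ}

theorem lintegral_mul_le_holder_three (hp : 1 ≤ p) (hr : 1 ≤ r) (hq : 0 < q)
    (hpqr : 1 / p + 1 / r = 1 + 1 / q) {g f : β → ℝ≥0∞} (hg : AEMeasurable g ν)
    (hf : AEMeasurable f ν) :
    ∫⁻ y, g y * f y ∂ν ≤ (∫⁻ y, g y ^ r * f y ^ p ∂ν) ^ (1 / q) *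
      (∫⁻ y, g y ^ r ∂ν) ^ (1 - 1 / p) * (∫⁻ y, f y ^ p ∂ν) ^ (1 - 1 / r) := by
  have hp' : 0 ≤ 1 - 1 / p := by rw [sub_nonneg, div_le_one (by linarith)]; exact hp
  have hr' : 0 ≤ 1 - 1 / r := by rw [sub_nonneg, div_le_one (by linarith)]; exact hr
  have H := ENNReal.lintegral_prod_norm_pow_le (μ := ν) Finset.univ
    (f := ![fun y => g y ^ r * f y ^ p, fun y => g y ^ r, fun y => f y ^ p])
    (p := ![1 / q, 1 - 1 / p, 1 - 1 / r]) ?_ ?_ ?_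
  · simp only [Fin.prod_univ_three, Matrix.cons_val_zero, Matrix.cons_val_one,
      Matrix.cons_val_two, Matrix.head_cons, Matrix.tail_cons] at H
    refine le_of_eq_of_le (lintegral_congr fun y => ?_) H
    have hg_exp : r * (1 / q) + r * (1 - 1 / p) = 1 := by
      rw [← mul_add, show 1 / q + (1 - 1 / p) = 1 / r by linarith]
      field_simp
    have hf_exp : p * (1 / q) + p * (1 - 1 / r) = 1 := by
      rw [← mul_add, show 1 / q + (1 - 1 / r) = 1 / p by linarith]
      field_simp
    rw [ENNReal.mul_rpow_of_nonneg _ _ (by positivity), ← ENNReal.rpow_mul, ← ENNReal.rpow_mul,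
      ← ENNReal.rpow_mul, ← ENNReal.rpow_mul, mul_right_comm _ (f y ^ _),
      ← ENNReal.rpow_add_of_nonneg _ _ (by positivity) (by nlinarith), mul_assoc,
      ← ENNReal.rpow_add_of_nonneg _ _ (by positivity) (by nlinarith), hg_exp, hf_exp,
      ENNReal.rpow_one, ENNReal.rpow_one]
  · intro i _
    fin_cases i
    · exact (hg.pow_const r).mul (hf.pow_const p)
    · exact hg.pow_const r
    · exact hf.pow_const p
  · simp only [Fin.sum_univ_three, Matrix.cons_val_zero, Matrix.cons_val_one,
      Matrix.cons_val_two, Matrix.head_cons, Matrix.tail_cons]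
    linarith
  · intro i _
    fin_cases i
    · exact one_div_nonneg.mpr hq.le
    · exact hp'
    · exact hr'

variable [SFinite μ] [SFinite ν]

theorem lintegral_lintegral_kernel_mul_rpow_le (hp : 1 ≤ p) (hr : 1 ≤ r) (hq : 0 < q)
    (hpqr : 1 / p + 1 / r = 1 + 1 / q) {G : α → β → ℝ≥0∞} (hG : Measurable (uncurry G))
    {I : ℝ≥0∞} (hrow : ∀ x, ∫⁻ y, G x y ^ r ∂ν ≤ I) (hcol : ∀ y, ∫⁻ x, G x y ^ r ∂μ ≤ I)
    {f : β → ℝ≥0∞} (hf : Measurable f) :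
    (∫⁻ x, (∫⁻ y, G x y * f y ∂ν) ^ q ∂μ) ^ (1 / q) ≤
      I ^ (1 / r) * (∫⁻ y, f y ^ p ∂ν) ^ (1 / p) := by
  have hp' : 0 ≤ 1 - 1 / p := by rw [sub_nonneg, div_le_one (by linarith)]; exact hp
  have hr' : 0 ≤ 1 - 1 / r := by rw [sub_nonneg, div_le_one (by linarith)]; exact hr
  set N := ∫⁻ y, f y ^ p ∂ν
  set M := I ^ (1 - 1 / p) * N ^ (1 - 1 / r)
  have hGf : Measurable fun z : α × β => G z.1 z.2 ^ r * f z.2 ^ p :=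
    (hG.pow_const r).mul ((hf.comp measurable_snd).pow_const p)
  have hpointwise (x : α) :
      (∫⁻ y, G x y * f y ∂ν) ^ q ≤ M ^ q * ∫⁻ y, G x y ^ r * f y ^ p ∂ν := by
    calc (∫⁻ y, G x y * f y ∂ν) ^ q
        ≤ ((∫⁻ y, G x y ^ r * f y ^ p ∂ν) ^ (1 / q) * M) ^ q := by
          gcongr
          refine (lintegral_mul_le_holder_three hp hr hq hpqr hG.of_uncurry_left.aemeasurable
            hf.aemeasurable).trans ?_
          rw [mul_assoc]
          gcongr
          show _ ≤ I ^ (1 - 1 / p) * N ^ (1 - 1 / r)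
          gcongr
          exact hrow x
      _ = M ^ q * ∫⁻ y, G x y ^ r * f y ^ p ∂ν := by
          rw [ENNReal.mul_rpow_of_nonneg _ _ hq.le, ← ENNReal.rpow_mul, one_div_mul_cancel hq.ne',
            ENNReal.rpow_one, mul_comm]
  have hdouble : ∫⁻ x, ∫⁻ y, G x y ^ r * f y ^ p ∂ν ∂μ ≤ I * N := by
    rw [lintegral_lintegral_swap hGf.aemeasurable]
    calc ∫⁻ y, ∫⁻ x, G x y ^ r * f y ^ p ∂μ ∂ν
        = ∫⁻ y, (∫⁻ x, G x y ^ r ∂μ) * f y ^ p ∂ν := by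
          refine lintegral_congr fun y => lintegral_mul_const _ ?_
          exact (hG.comp (measurable_id.prodMk measurable_const)).pow_const r
      _ ≤ ∫⁻ y, I * f y ^ p ∂ν := by gcongr with y; exact hcol y
      _ = I * N := lintegral_const_mul _ (hf.pow_const p)
  calc (∫⁻ x, (∫⁻ y, G x y * f y ∂ν) ^ q ∂μ) ^ (1 / q)
      ≤ (M ^ q * (I * N)) ^ (1 / q) := by
        gcongr
        refine (lintegral_mono hpointwise).trans ?_
        rw [lintegral_const_mul _ hGf.lintegral_prod_right']
        gcongr
    _ = I ^ (1 / r) * N ^ (1 / p) := by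
        rw [ENNReal.mul_rpow_of_nonneg _ _ (by positivity), ← ENNReal.rpow_mul,
          mul_one_div_cancel hq.ne', ENNReal.rpow_one,
          ENNReal.mul_rpow_of_nonneg _ _ (by positivity), mul_mul_mul_comm,
          ← ENNReal.rpow_add_of_nonneg _ _ hp' (by positivity),
          ← ENNReal.rpow_add_of_nonneg _ _ hr' (by positivity)]
        congr 2 <;> linarith

theorem eLpNorm_lintegral_kernel_mul_le (hp : 1 ≤ p) (hr : 1 ≤ r) (hq : 0 < q)
    (hpqr : 1 / p + 1 / r = 1 + 1 / q) {G : α → β → ℝ≥0∞} (hG : Measurable (uncurry G))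
    {I : ℝ≥0∞} (hrow : ∀ x, ∫⁻ y, G x y ^ r ∂ν ≤ I) (hcol : ∀ y, ∫⁻ x, G x y ^ r ∂μ ≤ I)
    {f : β → ℝ≥0∞} (hf : AEMeasurable f ν) :
    eLpNorm (fun x => ∫⁻ y, G x y * f y ∂ν) (ENNReal.ofReal q) μ ≤
      I ^ (1 / r) * eLpNorm f (ENNReal.ofReal p) ν := by
  have hTf : (fun x => ∫⁻ y, G x y * f y ∂ν) = fun x => ∫⁻ y, G x y * hf.mk f y ∂ν :=
    funext fun x => lintegral_congr_ae (hf.ae_eq_mk.mono fun y hy => congrArg (G x y * ·) hy)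
  rw [hTf, eLpNorm_congr_ae hf.ae_eq_mk,
    eLpNorm_eq_lintegral_rpow_enorm_toReal (by simpa using hq) ENNReal.ofReal_ne_top,
    eLpNorm_eq_lintegral_rpow_enorm_toReal (by simp; linarith) ENNReal.ofReal_ne_top,
    ENNReal.toReal_ofReal hq.le, ENNReal.toReal_ofReal (by linarith)]
  simp only [enorm_eq_self]
  exact lintegral_lintegral_kernel_mul_rpow_le hp hr hq hpqr hG hrow hcol hf.measurable_mk

end KernelYoung

theorem exp_neg_mul_sq_le_mul_exp {a δ ρ : ℝ} (ha : 0 ≤ a) (hδ : 0 ≤ δ) (hδρ : δ ≤ ρ) :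
    exp (-a * ρ ^ 2) ≤ exp (-(a / 2) * δ ^ 2) * exp (-(a / 2) * ρ ^ 2) := by
  rw [← exp_add, exp_le_exp]
  nlinarith [mul_le_mul hδρ hδρ hδ (hδ.trans hδρ)]

theorem enorm_mul_le_of_abs_le_gaussian {k u A a δ ρ : ℝ} (hA : 0 ≤ A) (ha : 0 ≤ a) (hδ : 0 ≤ δ)
    (hk : |k| ≤ A * exp (-a * ρ ^ 2)) (hδρ : u ≠ 0 → δ ≤ ρ) :
    ‖k * u‖ₑ ≤ ENNReal.ofReal (A * exp (-(a / 2) * δ ^ 2)) *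
      (ENNReal.ofReal (exp (-(a / 2) * ρ ^ 2)) * ‖u‖ₑ) := by
  rcases eq_or_ne u 0 with rfl | hu
  · simp
  rw [enorm_mul, ← mul_assoc, ← ENNReal.ofReal_mul (by positivity), Real.enorm_eq_ofReal_abs]
  gcongr
  calc |k| ≤ A * exp (-a * ρ ^ 2) := hk
    _ ≤ A * (exp (-(a / 2) * δ ^ 2) * exp (-(a / 2) * ρ ^ 2)) :=
        mul_le_mul_of_nonneg_left (exp_neg_mul_sq_le_mul_exp ha hδ (hδρ hu)) hA
    _ = _ := by ring

section Gaussian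

variable {V : Type*} [NormedAddCommGroup V] [InnerProductSpace ℝ V] [FiniteDimensional ℝ V]
  [MeasurableSpace V] [BorelSpace V]

theorem lintegral_ofReal_exp_neg_mul_dist_sq {b : ℝ} (hb : 0 < b) (x : V) :
    ∫⁻ y, ENNReal.ofReal (exp (-b * dist x y ^ 2)) =
      ENNReal.ofReal ((π / b) ^ (Module.finrank ℝ V / 2 : ℝ)) := by
  have hint : ∫ y, exp (-b * dist x y ^ 2) = (π / b) ^ (Module.finrank ℝ V / 2 : ℝ) := by
    simp_rw [dist_eq_norm]
    rw [integral_sub_left_eq_self (fun z => exp (-b * ‖z‖ ^ 2)),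
      GaussianFourier.integral_rexp_neg_mul_sq_norm hb]
  rw [← hint, ofReal_integral_eq_lintegral_ofReal]
  · exact Integrable.of_integral_ne_zero (by rw [hint]; positivity)
  · exact Filter.Eventually.of_forall fun y => (exp_pos _).le

theorem setLIntegral_ofReal_exp_neg_mul_dist_sq_rpow_le {b r : ℝ} (hb : 0 < b) (hr : 0 < r)
    (x : V) (S : Set V) :
    ∫⁻ y in S, ENNReal.ofReal (exp (-b * dist x y ^ 2)) ^ r ≤
      ENNReal.ofReal ((π / (r * b)) ^ (Module.finrank ℝ V / 2 : ℝ)) := by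
  have hpow (y : V) : ENNReal.ofReal (exp (-b * dist x y ^ 2)) ^ r =
      ENNReal.ofReal (exp (-(r * b) * dist x y ^ 2)) := by
    rw [ENNReal.ofReal_rpow_of_pos (exp_pos _), ← exp_mul]
    ring_nf
  simp_rw [hpow]
  exact (setLIntegral_le_lintegral _ _).trans_eq
    (lintegral_ofReal_exp_neg_mul_dist_sq (by positivity) x)

theorem eLpNorm_setIntegral_kernel_mul_le_of_gaussian_bound {Ω E F : Set V}
    (hF : MeasurableSet F) {δ : ℝ} (hδ : 0 ≤ δ) (hEF : ∀ x ∈ F, ∀ y ∈ E, δ ≤ dist x y)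
    {κ : V → V → ℝ} {A a : ℝ} (hA : 0 ≤ A) (ha : 0 < a)
    (hκ : ∀ᵐ z ∂(volume.restrict Ω).prod (volume.restrict Ω),
      |κ z.1 z.2| ≤ A * exp (-a * dist z.1 z.2 ^ 2))
    {p q r : ℝ} (hp : 1 ≤ p) (hr : 1 ≤ r) (hq : 0 < q) (hpqr : 1 / p + 1 / r = 1 + 1 / q)
    {h : V → ℝ} (hh : AEMeasurable h (volume.restrict Ω)) (hsupp : support h ⊆ E) :
    eLpNorm (fun x => ∫ y in Ω, κ x y * h y) (ENNReal.ofReal q) (volume.restrict (F ∩ Ω)) ≤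
      ENNReal.ofReal (A * exp (-(a / 2) * δ ^ 2)) *
        ENNReal.ofReal ((π / (r * (a / 2))) ^ (Module.finrank ℝ V / 2 : ℝ)) ^ (1 / r) *
        eLpNorm h (ENNReal.ofReal p) (volume.restrict Ω) := by
  have hr0 : 0 < r := by linarith
  set K : ℝ≥0 := (A * exp (-(a / 2) * δ ^ 2)).toNNReal
  set G : V → V → ℝ≥0∞ := fun x y => ENNReal.ofReal (exp (-(a / 2) * dist x y ^ 2))
  have hG : Measurable (uncurry G) :=
    (by fun_prop : Continuous fun z : V × V => exp (-(a / 2) * dist z.1 z.2 ^ 2)).measurable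
      |>.ennreal_ofReal
  have hdom : ∀ᵐ x ∂volume.restrict (F ∩ Ω),
      ‖∫ y in Ω, κ x y * h y‖ₑ ≤ K * ‖∫⁻ y in Ω, G x y * ‖h y‖ₑ‖ₑ := by
    have hxF : ∀ᵐ x ∂volume.restrict (F ∩ Ω), x ∈ F :=
      ae_mono (Measure.restrict_mono inter_subset_left le_rfl) (ae_restrict_mem hF)
    have hκx := ae_mono (Measure.restrict_mono (inter_subset_right (s := F)) le_rfl)
      (Measure.ae_ae_of_ae_prod hκ)
    filter_upwards [hxF, hκx] with x hx hκx
    rw [enorm_eq_self, ← lintegral_const_mul' _ _ ENNReal.coe_ne_top]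
    refine (enorm_integral_le_lintegral_enorm _).trans (lintegral_mono_ae ?_)
    filter_upwards [hκx] with y hy
    exact enorm_mul_le_of_abs_le_gaussian hA ha.le hδ hy
      fun hy0 => hEF x hx y (hsupp hy0)
  calc _ ≤ K • eLpNorm (fun x => ∫⁻ y in Ω, G x y * ‖h y‖ₑ) (ENNReal.ofReal q)
        (volume.restrict (F ∩ Ω)) := eLpNorm_le_nnreal_smul_eLpNorm_of_ae_le_mul' hdom _
    _ ≤ K • (ENNReal.ofReal ((π / (r * (a / 2))) ^ (Module.finrank ℝ V / 2 : ℝ)) ^ (1 / r) *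
        eLpNorm (fun y => ‖h y‖ₑ) (ENNReal.ofReal p) (volume.restrict Ω)) := by
      gcongr
      exact eLpNorm_lintegral_kernel_mul_le hp hr hq hpqr hG
        (fun x => setLIntegral_ofReal_exp_neg_mul_dist_sq_rpow_le (by positivity) hr0 x Ω)
        (fun y => by
          simp_rw [G, dist_comm _ y]
          exact setLIntegral_ofReal_exp_neg_mul_dist_sq_rpow_le (by positivity) hr0 y _)
        hh.enorm
    _ = _ := by rw [eLpNorm_enorm, ENNReal.smul_def, smul_eq_mul, mul_assoc]; rfl

end Gaussian

theorem exists_one_le_one_div_add_one_div_eq {p q : ℝ} (hp : 1 ≤ p) (hpq : p ≤ q) :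
    ∃ r, 1 ≤ r ∧ 1 / p + 1 / r = 1 + 1 / q := by
  have hp0 : 0 < p := by linarith
  have hinv : 1 / q ≤ 1 / p := one_div_le_one_div_of_le hp0 hpq
  have hinv1 : 1 / p ≤ 1 := (div_le_one hp0).2 hp
  have hs : 0 < 1 + 1 / q - 1 / p := by
    have : 0 < 1 / q := one_div_pos.2 (by linarith)
    linarith
  refine ⟨(1 + 1 / q - 1 / p)⁻¹, (one_le_inv₀ hs).2 (by linarith), ?_⟩
  rw [one_div (_)⁻¹, inv_inv]
  ring

theorem sInf_image_dist_nonneg {X : Type*} [PseudoMetricSpace X] (S : Set (X × X)) :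
    0 ≤ sInf ((fun z : X × X => dist z.1 z.2) '' S) :=
  Real.sInf_nonneg (by rintro _ ⟨_, -, rfl⟩; exact dist_nonneg)

theorem sInf_image_dist_le {X : Type*} [PseudoMetricSpace X] {E F : Set X} {x y : X}
    (hx : x ∈ E) (hy : y ∈ F) :
    sInf ((fun z : X × X => dist z.1 z.2) '' (E ×ˢ F)) ≤ dist x y :=
  csInf_le ⟨0, by rintro _ ⟨_, -, rfl⟩; exact dist_nonneg⟩ ⟨(x, y), ⟨hx, hy⟩, rfl⟩

theorem gaussian_offdiagonal_constant_eq {C c t n r : ℝ} (hc : 0 < c) (ht : 0 < t) (hr : 0 < r)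
    (δ : ℝ) :
    C / t ^ (n / 2) * exp (-(c / t / 2) * δ ^ 2) * ((π / (r * (c / t / 2))) ^ (n / 2)) ^ (1 / r) =
      C * (2 * π / (r * c)) ^ (n / 2 / r) * t ^ (n / 2 / r - n / 2) *
        exp (-(c / 2) * δ ^ 2 / t) := by
  have hbase : π / (r * (c / t / 2)) = 2 * π / (r * c) * t := by field_simp
  rw [hbase, ← Real.rpow_mul (by positivity), Real.mul_rpow (by positivity) ht.le,
    Real.rpow_sub ht, mul_one_div]
  ring_nf

theorem offdiagonal_estimate_general (d : ℕ)
    (Ω E F : Set (EuclideanSpace ℝ (Fin d)))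
    (hF : MeasurableSet F)
    (δ : ℝ)
    (hδ : δ = sInf ((fun p : EuclideanSpace ℝ (Fin d) × EuclideanSpace ℝ (Fin d) =>
      dist p.1 p.2) '' (E ×ˢ F)))
    (k : ℝ → EuclideanSpace ℝ (Fin d) → EuclideanSpace ℝ (Fin d) → ℝ)
    (C c : ℝ) (hC : 0 < C) (hc : 0 < c)
    (hker : ∀ t : ℝ, 0 < t →
      ∀ᵐ q ∂((volume.restrict Ω).prod (volume.restrict Ω)),
        0 ≤ k t q.1 q.2 ∧
        k t q.1 q.2 ≤ C / t ^ ((d : ℝ) / 2) * Real.exp (-c * dist q.1 q.2 ^ 2 / t)) :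
    ∀ p : ℝ, 1 ≤ p → p ≤ 2 →
      ∃ C' c' : ℝ, 0 < C' ∧ 0 < c' ∧
        ∀ h : EuclideanSpace ℝ (Fin d) → ℝ,
          MemLp h 2 (volume.restrict Ω) → MemLp h (ENNReal.ofReal p) (volume.restrict Ω) →
          Function.support h ⊆ E ∩ Ω →
          ∀ t : ℝ, 0 < t →
            eLpNorm (fun x => ∫ y in Ω, k t x y * h y) 2 (volume.restrict (F ∩ Ω)) ≤
              ENNReal.ofReal
                  (C' * t ^ (((d : ℝ) / 2 - (d : ℝ) / p) / 2) * Real.exp (-c' * δ ^ 2 / t)) *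
                eLpNorm h (ENNReal.ofReal p) (volume.restrict Ω) := by
  intro p hp1 hp2
  obtain ⟨r, hr1, hpr⟩ := exists_one_le_one_div_add_one_div_eq hp1 hp2
  have hr0 : 0 < r := by linarith
  refine ⟨C * (2 * π / (r * c)) ^ ((d : ℝ) / 2 / r), c / 2, by positivity, by positivity, ?_⟩
  intro h _ hhp hsupp t ht
  have hEF : ∀ x ∈ F, ∀ y ∈ E, δ ≤ dist x y := fun x hx y hy =>
    hδ ▸ dist_comm y x ▸ sInf_image_dist_le hy hx
  have hκ : ∀ᵐ z ∂(volume.restrict Ω).prod (volume.restrict Ω),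
      |k t z.1 z.2| ≤ C / t ^ ((d : ℝ) / 2) * exp (-(c / t) * dist z.1 z.2 ^ 2) := by
    filter_upwards [hker t ht] with z hz
    rw [abs_of_nonneg hz.1]
    convert hz.2 using 3
    ring
  have key := eLpNorm_setIntegral_kernel_mul_le_of_gaussian_bound hF
    (hδ ▸ sInf_image_dist_nonneg _) hEF (by positivity) (by positivity) hκ hp1 hr1 two_pos hpr
    hhp.1.aemeasurable (hsupp.trans inter_subset_left)
  rw [ENNReal.ofReal_ofNat, finrank_euclideanSpace_fin] at key
  refine key.trans_eq ?_
  rw [ENNReal.ofReal_rpow_of_nonneg (by positivity) (by positivity),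
    ← ENNReal.ofReal_mul (by positivity), gaussian_offdiagonal_constant_eq hc ht hr0]
  congr 4
  rw [div_eq_mul_one_div _ r, show 1 / r = 1 + 1 / 2 - 1 / p by linarith]
  ring_nf

/-- `L^p`–`L²` off-diagonal estimates: if `T` is an integral operator on `L²(Ω)` with
kernel `k_t` satisfying the Gaussian bound `0 ≤ k_t(x,y) ≤ C t^{−d/2} e^{−c|x−y|²/t}`
a.e., and `δ = dist(E,F)`, then for every `p ∈ [1,2]` there are `C', c' > 0` such that
for every `h ∈ L² ∩ L^p` supported in `E ∩ Ω` and every `t > 0`,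
`‖T h‖_{L²(F∩Ω)} ≤ C' t^{(d/2 − d/p)/2} e^{−c'δ²/t} ‖h‖_{L^p}`. -/
theorem offdiagonal_estimate (d : ℕ) (hd : 0 < d)
    (Ω E F : Set (EuclideanSpace ℝ (Fin d)))
    (hΩ : MeasurableSet Ω) (hE : MeasurableSet E) (hF : MeasurableSet F)
    (δ : ℝ)
    (hδ : δ = sInf ((fun p : EuclideanSpace ℝ (Fin d) × EuclideanSpace ℝ (Fin d) =>
      dist p.1 p.2) '' (E ×ˢ F)))
    (k : ℝ → EuclideanSpace ℝ (Fin d) → EuclideanSpace ℝ (Fin d) → ℝ)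
    (hkmeas : ∀ t : ℝ, Measurable (Function.uncurry (k t)))
    (C c : ℝ) (hC : 0 < C) (hc : 0 < c)
    (hker : ∀ t : ℝ, 0 < t →
      ∀ᵐ q ∂((volume.restrict Ω).prod (volume.restrict Ω)),
        0 ≤ k t q.1 q.2 ∧
        k t q.1 q.2 ≤ C / t ^ ((d : ℝ) / 2) * Real.exp (-c * dist q.1 q.2 ^ 2 / t)) :
    ∀ p : ℝ, 1 ≤ p → p ≤ 2 →
      ∃ C' c' : ℝ, 0 < C' ∧ 0 < c' ∧
        ∀ h : EuclideanSpace ℝ (Fin d) → ℝ,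
          MemLp h 2 (volume.restrict Ω) → MemLp h (ENNReal.ofReal p) (volume.restrict Ω) →
          Function.support h ⊆ E ∩ Ω →
          ∀ t : ℝ, 0 < t →
            eLpNorm (fun x => ∫ y in Ω, k t x y * h y) 2 (volume.restrict (F ∩ Ω)) ≤
              ENNReal.ofReal
                  (C' * t ^ (((d : ℝ) / 2 - (d : ℝ) / p) / 2) * Real.exp (-c' * δ ^ 2 / t)) *
                eLpNorm h (ENNReal.ofReal p) (volume.restrict Ω) :=
  offdiagonal_estimate_general d Ω E F hF δ hδ k C c hC hc hker
end
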